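/- arXiv:1908.07925 — 7 statements merged into one kernel-verified Lean document; each statement's English description precedes it below -/
import Mathlib

section
/- Let [A] be an interval matrix determined by A̲ ≤ Ā. Then [A] is strongly an S-matrix if and only if the system A̲x > 0, x > 0 (entrywise) is feasible. -/
open Matrix

/-- Spectral radius of a real square matrix (via its complex spectrum). -/
noncomputable def specRad {n : ℕ} (A : Matrix (Fin n) (Fin n) ℝ) : ℝ :=
  (spectralRadius ℂ (A.map (algebraMap ℝ ℂ))).toReal

/-- `A` is an M-matrix: `A = s•I - N` with `N ≥ 0` and `s > ρ(N)`. -/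
def IsMMatrix {n : ℕ} (A : Matrix (Fin n) (Fin n) ℝ) : Prop :=
  ∃ (s : ℝ) (N : Matrix (Fin n) (Fin n) ℝ),
    (∀ i j, 0 ≤ N i j) ∧ A = s • (1 : Matrix (Fin n) (Fin n) ℝ) - N ∧ specRad N < s

/-- `A` is an M0-matrix: `A = s•I - N` with `N ≥ 0` and `s ≥ ρ(N)`. -/
def IsM0Matrix {n : ℕ} (A : Matrix (Fin n) (Fin n) ℝ) : Prop :=
  ∃ (s : ℝ) (N : Matrix (Fin n) (Fin n) ℝ),
    (∀ i j, 0 ≤ N i j) ∧ A = s • (1 : Matrix (Fin n) (Fin n) ℝ) - N ∧ specRad N ≤ s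

/-- Comparison matrix. -/
def compMatrix {n : ℕ} (A : Matrix (Fin n) (Fin n) ℝ) : Matrix (Fin n) (Fin n) ℝ :=
  fun i j => if i = j then |A i i| else -|A i j|

def IsHMatrix {n : ℕ} (A : Matrix (Fin n) (Fin n) ℝ) : Prop :=
  IsMMatrix (compMatrix A)

def IsSMatrix {n : ℕ} (A : Matrix (Fin n) (Fin n) ℝ) : Prop :=
  ∃ x : Fin n → ℝ, (∀ i, 0 < x i) ∧ (∀ i, 0 < A.mulVec x i)

def Copositive {n : ℕ} (A : Matrix (Fin n) (Fin n) ℝ) : Prop :=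
  ∀ x : Fin n → ℝ, (∀ i, 0 ≤ x i) → 0 ≤ x ⬝ᵥ A.mulVec x

def StrictlyCopositive {n : ℕ} (A : Matrix (Fin n) (Fin n) ℝ) : Prop :=
  ∀ x : Fin n → ℝ, (∀ i, 0 ≤ x i) → x ≠ 0 → 0 < x ⬝ᵥ A.mulVec x

def Semimonotone {n : ℕ} (A : Matrix (Fin n) (Fin n) ℝ) : Prop :=
  ∀ I : Finset (Fin n), I.Nonempty →
    ¬ ∃ x : ↥I → ℝ,
      (∀ i, (A.submatrix ((↑) : ↥I → Fin n) ((↑) : ↥I → Fin n)).mulVec x i < 0) ∧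
      (∀ i, 0 ≤ x i)

def PrincipallyNondegenerate {n : ℕ} (A : Matrix (Fin n) (Fin n) ℝ) : Prop :=
  ∀ I : Finset (Fin n), I.Nonempty →
    (A.submatrix ((↑) : ↥I → Fin n) ((↑) : ↥I → Fin n)).det ≠ 0

/-- A nonnegative matrix is irreducible if `(I + A)^(n-1) > 0` entrywise. -/
def IrreducibleMat {n : ℕ} (A : Matrix (Fin n) (Fin n) ℝ) : Prop :=
  ∀ i j, 0 < ((1 + A) ^ (n - 1)) i j

/-- The block matrix `[[A_II, -A_IJ], [-A_JI, A_JJ]]`. -/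
def csBlock {n : ℕ} (A : Matrix (Fin n) (Fin n) ℝ) (I J : Finset (Fin n)) :
    Matrix (↥I ⊕ ↥J) (↥I ⊕ ↥J) ℝ :=
  Matrix.fromBlocks
    (A.submatrix ((↑) : ↥I → Fin n) ((↑) : ↥I → Fin n))
    (-(A.submatrix ((↑) : ↥I → Fin n) ((↑) : ↥J → Fin n)))
    (-(A.submatrix ((↑) : ↥J → Fin n) ((↑) : ↥I → Fin n)))
    (A.submatrix ((↑) : ↥J → Fin n) ((↑) : ↥J → Fin n))

def ColumnSufficient {n : ℕ} (A : Matrix (Fin n) (Fin n) ℝ) : Prop :=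
  ∀ I J : Finset (Fin n), Disjoint I J → (I ∪ J).Nonempty →
    ¬ ∃ x : (↥I ⊕ ↥J) → ℝ,
      (∀ k, (csBlock A I J).mulVec x k ≤ 0) ∧
      (csBlock A I J).mulVec x ≠ 0 ∧
      (∀ k, 0 < x k)

def IsR0Matrix {n : ℕ} (A : Matrix (Fin n) (Fin n) ℝ) : Prop :=
  ∀ I : Finset (Fin n), I.Nonempty →
    ¬ ∃ x : ↥I → ℝ,
      (∀ i, (A.submatrix ((↑) : ↥I → Fin n) ((↑) : ↥I → Fin n)).mulVec x i = 0) ∧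
      (∀ j : ↥(Iᶜ : Finset (Fin n)),
        0 ≤ (A.submatrix ((↑) : ↥(Iᶜ : Finset (Fin n)) → Fin n) ((↑) : ↥I → Fin n)).mulVec x j) ∧
      (∀ i, 0 < x i)

def IsRMatrix {n : ℕ} (A : Matrix (Fin n) (Fin n) ℝ) : Prop :=
  ∀ I : Finset (Fin n), I.Nonempty →
    ¬ ∃ (x : ↥I → ℝ) (t : ℝ),
      (∀ i, (A.submatrix ((↑) : ↥I → Fin n) ((↑) : ↥I → Fin n)).mulVec x i + t = 0) ∧
      (∀ j : ↥(Iᶜ : Finset (Fin n)),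
        0 ≤ (A.submatrix ((↑) : ↥(Iᶜ : Finset (Fin n)) → Fin n) ((↑) : ↥I → Fin n)).mulVec x j + t) ∧
      (∀ i, 0 < x i) ∧ 0 ≤ t

def PosDefMat {n : ℕ} (A : Matrix (Fin n) (Fin n) ℝ) : Prop :=
  ∀ x : Fin n → ℝ, x ≠ 0 → 0 < x ⬝ᵥ A.mulVec x

def PosSemidefMat {n : ℕ} (A : Matrix (Fin n) (Fin n) ℝ) : Prop :=
  ∀ x : Fin n → ℝ, 0 ≤ x ⬝ᵥ A.mulVec x

/-- Membership of `A` in the interval matrix `[Al, Au]`. -/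
def memInterval {n : ℕ} (Al Au A : Matrix (Fin n) (Fin n) ℝ) : Prop :=
  ∀ i j, Al i j ≤ A i j ∧ A i j ≤ Au i j

/-- The mixed block matrix `[[Al_II, -Au_IJ], [-Au_JI, Al_JJ]]`. -/
def csMixedBlock {n : ℕ} (Al Au : Matrix (Fin n) (Fin n) ℝ) (I J : Finset (Fin n)) :
    Matrix (↥I ⊕ ↥J) (↥I ⊕ ↥J) ℝ :=
  Matrix.fromBlocks
    (Al.submatrix ((↑) : ↥I → Fin n) ((↑) : ↥I → Fin n))
    (-(Au.submatrix ((↑) : ↥I → Fin n) ((↑) : ↥J → Fin n)))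
    (-(Au.submatrix ((↑) : ↥J → Fin n) ((↑) : ↥I → Fin n)))
    (Al.submatrix ((↑) : ↥J → Fin n) ((↑) : ↥J → Fin n))

theorem stmt_0 {n : ℕ} (Al Au : Matrix (Fin n) (Fin n) ℝ)
    (hle : ∀ i j, Al i j ≤ Au i j) :
    (∀ A : Matrix (Fin n) (Fin n) ℝ, memInterval Al Au A → IsSMatrix A) ↔
      (∃ x : Fin n → ℝ, (∀ i, 0 < x i) ∧ (∀ i, 0 < Al.mulVec x i)) := by
  constructor
  · intro h
    exact h Al (fun i j => ⟨le_refl _, hle i j⟩)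
  · rintro ⟨x, hx, hAl⟩ A hA
    refine ⟨x, hx, fun i => lt_of_lt_of_le (hAl i) ?_⟩
    simp only [Matrix.mulVec, dotProduct]
    exact Finset.sum_le_sum fun j _ =>
      mul_le_mul_of_nonneg_right (hA i j).1 (hx j).le
end

section
/- Let [A] be an interval matrix determined by A̲ ≤ Ā. Then [A] is strongly copositive if and only if A̲ is copositive, and [A] is strongly strictly copositive if and only if A̲ is strictly copositive. -/
open Matrix

lemma quad_mono {n : ℕ} (Al Au A : Matrix (Fin n) (Fin n) ℝ)
    (hA : memInterval Al Au A) (x : Fin n → ℝ) (hx : ∀ i, 0 ≤ x i) :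
    x ⬝ᵥ Al.mulVec x ≤ x ⬝ᵥ A.mulVec x := by
  simp only [dotProduct, mulVec, Finset.mul_sum]
  refine Finset.sum_le_sum fun i _ => Finset.sum_le_sum fun j _ => ?_
  exact mul_le_mul_of_nonneg_left (mul_le_mul_of_nonneg_right (hA i j).1 (hx j)) (hx i)

theorem stmt_1 {n : ℕ} (Al Au : Matrix (Fin n) (Fin n) ℝ)
    (hle : ∀ i j, Al i j ≤ Au i j) :
    ((∀ A : Matrix (Fin n) (Fin n) ℝ, memInterval Al Au A → Copositive A) ↔ Copositive Al) ∧
    ((∀ A : Matrix (Fin n) (Fin n) ℝ, memInterval Al Au A → StrictlyCopositive A) ↔ StrictlyCopositive Al) := by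
  constructor
  · constructor
    · intro h
      exact h Al fun i j => ⟨le_refl _, hle i j⟩
    · intro h A hA x hx
      exact le_trans (h x hx) (quad_mono Al Au A hA x hx)
  · constructor
    · intro h
      exact h Al fun i j => ⟨le_refl _, hle i j⟩
    · intro h A hA x hx hx0
      exact lt_of_lt_of_le (h x hx hx0) (quad_mono Al Au A hA x hx)
end

section
/- Let [A] be an interval matrix with midpoint Ac = (1/2)(A̲+Ā), and suppose Ac is an M0-matrix. Then [A] is strongly semimonotone if and only if A̲ is an M0-matrix. -/
open Matrix

/-!
Off the diagonal `Al ≤ Ac ≤ 0`, so `Al` is a Z-matrix, and every member of the interval matrix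
dominates `Al`; semimonotonicity passes to entrywise larger matrices. So it suffices that a
Z-matrix `s • 1 - N` (`N ≥ 0`) is semimonotone iff `ρ(N) ≤ s`, where semimonotone means that every
nonzero `x ≥ 0` has an index with `x i > 0` and `(A x) i ≥ 0`. If `ρ(N) > s`, the vector `|v|` of
an eigenvector `v` for an eigenvalue of modulus `ρ(N)` satisfies `ρ(N) |v| ≤ N |v|` and violates
this. Conversely a violating `x` satisfies `t x ≤ N x` for some `t > s`, hence `tᵐ x ≤ Nᵐ x`, and
Gelfand's formula forces `t ≤ ρ(N)` (the Collatz–Wielandt bound).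
-/

open Filter Topology

namespace spectrum

variable {A : Type*} [NormedRing A] [NormedAlgebra ℂ A] [CompleteSpace A]

theorem eventually_nnnorm_pow_le (a : A) {r : NNReal} (hr : spectralRadius ℂ a < r) :
    ∀ᶠ m in atTop, ‖a ^ m‖₊ ≤ r ^ m := by
  filter_upwards [(pow_nnnorm_pow_one_div_tendsto_nhds_spectralRadius a).eventually_lt_const hr,
    eventually_ne_atTop 0] with m hm hm0
  have hpow := ENNReal.rpow_le_rpow hm.le (Nat.cast_nonneg m : (0 : ℝ) ≤ m)
  rw [← ENNReal.rpow_mul, one_div_mul_cancel (Nat.cast_ne_zero.2 hm0), ENNReal.rpow_one,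
    ENNReal.rpow_natCast] at hpow
  exact_mod_cast hpow

end spectrum

namespace Matrix

variable {m n : Type*} [Fintype n]

theorem mulVec_mono_of_nonneg {N : Matrix m n ℝ} (hN : ∀ i j, 0 ≤ N i j) {v w : n → ℝ}
    (hvw : v ≤ w) : N *ᵥ v ≤ N *ᵥ w := fun i =>
  Finset.sum_le_sum fun j _ => mul_le_mul_of_nonneg_left (hvw j) (hN i j)

section
attribute [local instance] Matrix.linftyOpSeminormedAddCommGroup

theorem nnnorm_apply_le_linfty_opNNNorm [Fintype m] {α : Type*} [SeminormedAddCommGroup α]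
    (A : Matrix m n α) (i : m) (j : n) : ‖A i j‖₊ ≤ ‖A‖₊ := by
  rw [linfty_opNNNorm_def]
  calc ‖A i j‖₊ ≤ ∑ k, ‖A i k‖₊ :=
        Finset.single_le_sum (f := fun k => ‖A i k‖₊) (fun _ _ => zero_le) (Finset.mem_univ j)
    _ ≤ _ := Finset.le_sup (f := fun i => ∑ k, ‖A i k‖₊) (Finset.mem_univ i)

end

end Matrix

section SpectralRadius

attribute [local instance] Matrix.linftyOpNormedRing Matrix.linftyOpNormedAlgebra

variable {n : ℕ}

theorem specRad_nonneg (N : Matrix (Fin n) (Fin n) ℝ) : 0 ≤ specRad N := ENNReal.toReal_nonneg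

theorem eventually_abs_pow_apply_le (N : Matrix (Fin n) (Fin n) ℝ) {r : ℝ} (hr : specRad N < r) :
    ∀ᶠ m in atTop, ∀ i j, |(N ^ m) i j| ≤ r ^ m := by
  rcases isEmpty_or_nonempty (Fin n) with hn | hn
  · exact .of_forall fun _ i => isEmptyElim i
  set a := N.map (algebraMap ℝ ℂ)
  have hr0 : 0 ≤ r := (specRad_nonneg N).trans hr.le
  have ha : spectralRadius ℂ a < r.toNNReal := by
    have hfin : spectralRadius ℂ a ≠ ⊤ :=
      ne_top_of_le_ne_top ENNReal.coe_ne_top (spectrum.spectralRadius_le_nnnorm a)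
    exact (ENNReal.lt_ofReal_iff_toReal_lt hfin).2 hr
  filter_upwards [spectrum.eventually_nnnorm_pow_le a ha] with m hm i j
  have hentry := NNReal.coe_le_coe.2 ((Matrix.nnnorm_apply_le_linfty_opNNNorm _ i j).trans hm)
  rw [← Matrix.map_pow] at hentry
  simpa [hr0] using hentry

theorem pow_smul_le_pow_mulVec {N : Matrix (Fin n) (Fin n) ℝ} (hN : ∀ i j, 0 ≤ N i j)
    {x : Fin n → ℝ} {t : ℝ} (ht0 : 0 ≤ t) (ht : t • x ≤ N *ᵥ x) (m : ℕ) :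
    t ^ m • x ≤ (N ^ m) *ᵥ x := by
  induction m with
  | zero => simp
  | succ m ih =>
    calc t ^ (m + 1) • x = t • (t ^ m • x) := by rw [pow_succ', mul_smul]
      _ ≤ t • ((N ^ m) *ᵥ x) := smul_le_smul_of_nonneg_left ih ht0
      _ = (N ^ m) *ᵥ (t • x) := (Matrix.mulVec_smul _ _ _).symm
      _ ≤ (N ^ m) *ᵥ (N *ᵥ x) := Matrix.mulVec_mono_of_nonneg (Matrix.pow_apply_nonneg hN m) ht
      _ = (N ^ (m + 1)) *ᵥ x := by rw [Matrix.mulVec_mulVec, pow_succ]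

theorem le_specRad_of_smul_le_mulVec {N : Matrix (Fin n) (Fin n) ℝ} (hN : ∀ i j, 0 ≤ N i j)
    {x : Fin n → ℝ} (hx : 0 ≤ x) (hx0 : x ≠ 0) {t : ℝ} (ht : t • x ≤ N *ᵥ x) :
    t ≤ specRad N := by
  by_contra! hlt
  obtain ⟨r, hρr, hrt⟩ := exists_between hlt
  have hr : 0 < r := (specRad_nonneg N).trans_lt hρr
  obtain ⟨i, hi⟩ : ∃ i, 0 < x i := by
    by_contra! h
    exact hx0 (le_antisymm h hx)
  set C := ∑ j, x j
  have hbound : ∀ᶠ m in atTop, t ^ m * x i ≤ r ^ m * C := by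
    filter_upwards [eventually_abs_pow_apply_le N hρr] with m hm
    calc t ^ m * x i ≤ ((N ^ m) *ᵥ x) i := pow_smul_le_pow_mulVec hN (hr.trans hrt).le ht m i
      _ = ∑ j, (N ^ m) i j * x j := rfl
      _ ≤ ∑ j, r ^ m * x j :=
        Finset.sum_le_sum fun j _ =>
          mul_le_mul_of_nonneg_right ((le_abs_self _).trans (hm i j)) (hx j)
      _ = r ^ m * C := Finset.mul_sum _ _ _ |>.symm
  have hgrow : Tendsto (fun m : ℕ => (t / r) ^ m * x i) atTop atTop :=
    (tendsto_pow_atTop_atTop_of_one_lt ((one_lt_div hr).2 hrt)).atTop_mul_const hi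
  obtain ⟨m, hm, hm'⟩ := (hbound.and (hgrow.eventually_gt_atTop C)).exists
  rw [div_pow, div_mul_eq_mul_div, lt_div_iff₀ (pow_pos hr m)] at hm'
  linarith

theorem lt_specRad_of_lt_mulVec {N : Matrix (Fin n) (Fin n) ℝ} (hN : ∀ i j, 0 ≤ N i j)
    {x : Fin n → ℝ} (hx : 0 ≤ x) (hx0 : x ≠ 0) {s : ℝ}
    (hs : ∀ i, 0 < x i → s * x i < (N *ᵥ x) i) : s < specRad N := by
  have hnear : ∀ᶠ t in 𝓝 s, ∀ i, 0 < x i → t * x i < (N *ᵥ x) i :=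
    eventually_all.2 fun i => by
      by_cases hi : 0 < x i
      · exact ((continuous_mul_const (x i)).tendsto s).eventually (gt_mem_nhds (hs i hi))
          |>.mono fun _ ht _ => ht
      · exact .of_forall fun _ h => absurd h hi
  have habove : ∀ᶠ t in 𝓝[>] s, s < t := self_mem_nhdsWithin
  obtain ⟨t, ht, hst⟩ := ((hnear.filter_mono nhdsWithin_le_nhds).and habove).exists
  refine lt_of_lt_of_le hst (le_specRad_of_smul_le_mulVec hN hx hx0 fun i => ?_)
  rcases (hx i).eq_or_lt with hi | hi
  · simpa [← hi] using Matrix.mulVec_mono_of_nonneg hN hx i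
  · exact (ht i hi).le

theorem exists_nonneg_specRad_smul_le_mulVec [Nonempty (Fin n)] {N : Matrix (Fin n) (Fin n) ℝ}
    (hN : ∀ i j, 0 ≤ N i j) : ∃ x : Fin n → ℝ, 0 ≤ x ∧ x ≠ 0 ∧ specRad N • x ≤ N *ᵥ x := by
  set a := N.map (algebraMap ℝ ℂ)
  obtain ⟨z, hz, hzρ⟩ := spectrum.exists_nnnorm_eq_spectralRadius a
  have hρ : specRad N = ‖z‖ := by rw [specRad, ← hzρ]; simp
  obtain ⟨v, hv⟩ := (Module.End.hasEigenvalue_iff_mem_spectrum.2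
    ((Matrix.spectrum_toLin' a).symm ▸ hz)).exists_hasEigenvector
  refine ⟨fun i => ‖v i‖, fun i => norm_nonneg _,
    fun h => hv.2 (funext fun i => by simpa using congrFun h i), fun i => ?_⟩
  calc (specRad N • fun i => ‖v i‖) i = ‖(a *ᵥ v) i‖ := by
        simp [hρ, ← Matrix.toLin'_apply, hv.apply_eq_smul]
    _ = ‖∑ j, a i j * v j‖ := rfl
    _ ≤ ∑ j, ‖a i j * v j‖ := norm_sum_le _ _
    _ = ∑ j, N i j * ‖v j‖ := by simp [a, abs_of_nonneg (hN _ _)]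

end SpectralRadius

theorem Matrix.submatrix_mulVec_of_eq_zero {ι α : Type*} [Fintype ι] [NonUnitalNonAssocSemiring α]
    (A : Matrix ι ι α) {I : Finset ι} {x : ι → α} (hx : ∀ j ∉ I, x j = 0) (i : I) :
    (A.submatrix ((↑) : I → ι) ((↑) : I → ι) *ᵥ fun j => x j) i = (A *ᵥ x) i := by
  change ∑ j : I, A i j * x j = ∑ j, A i j * x j
  rw [Finset.sum_coe_sort I (fun j => A i j * x j)]
  exact Finset.sum_subset (Finset.subset_univ I) fun j _ hj => by simp [hx j hj]

section Semimonotone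

variable {n : ℕ}

theorem semimonotone_iff {A : Matrix (Fin n) (Fin n) ℝ} :
    Semimonotone A ↔ ∀ x : Fin n → ℝ, 0 ≤ x → x ≠ 0 → ∃ i, 0 < x i ∧ 0 ≤ (A *ᵥ x) i := by
  classical
  constructor
  · intro hA x hx hx0
    by_contra! hneg
    set I := Finset.univ.filter fun i => 0 < x i
    have hxI : ∀ j ∉ I, x j = 0 := fun j hj => by
      by_contra h
      exact hj (by simpa [I] using (hx j).lt_of_ne' h)
    obtain ⟨i, hi⟩ := (Pi.lt_def.1 (hx.lt_of_ne hx0.symm)).2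
    refine hA I ⟨i, by simpa [I] using hi⟩ ⟨fun j => x j, fun j => ?_, fun j => hx j⟩
    rw [A.submatrix_mulVec_of_eq_zero hxI]
    exact hneg j (Finset.mem_filter.1 j.2).2
  · rintro hA I ⟨i, hi⟩ ⟨x, hneg, hx⟩
    set y : Fin n → ℝ := fun j => if h : j ∈ I then x ⟨j, h⟩ else 0
    have hyI : ∀ j ∉ I, y j = 0 := fun j hj => dif_neg hj
    have hyx : (fun j : I => y j) = x := funext fun j => dif_pos j.2
    have hAy : ∀ j : I, (A *ᵥ y) j < 0 := fun j => by
      rw [← A.submatrix_mulVec_of_eq_zero hyI, hyx]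
      exact hneg j
    have hy0 : y ≠ 0 := fun h => by simpa [h] using hAy ⟨i, hi⟩
    obtain ⟨j, hj, hAj⟩ := hA y (fun j => by by_cases h : j ∈ I <;> simp [y, h, hx]) hy0
    have hjI : j ∈ I := by_contra fun h => hj.ne' (hyI j h)
    exact (hAy ⟨j, hjI⟩).not_ge hAj

theorem Semimonotone.of_le {A B : Matrix (Fin n) (Fin n) ℝ} (hA : Semimonotone A)
    (hAB : ∀ i j, A i j ≤ B i j) : Semimonotone B := by
  rw [semimonotone_iff] at hA ⊢
  intro x hx hx0
  obtain ⟨i, hi, hAi⟩ := hA x hx hx0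
  have hAB_x : ∑ j, A i j * x j ≤ ∑ j, B i j * x j :=
    Finset.sum_le_sum fun j _ => mul_le_mul_of_nonneg_right (hAB i j) (hx j)
  exact ⟨i, hi, hAi.trans hAB_x⟩

theorem IsM0Matrix.apply_nonpos {A : Matrix (Fin n) (Fin n) ℝ} (hA : IsM0Matrix A) {i j : Fin n}
    (hij : i ≠ j) : A i j ≤ 0 := by
  obtain ⟨s, N, hN, rfl, -⟩ := hA
  simpa [hij] using hN i j

theorem IsM0Matrix.semimonotone {A : Matrix (Fin n) (Fin n) ℝ} (hA : IsM0Matrix A) :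
    Semimonotone A := by
  obtain ⟨s, N, hN, rfl, hρ⟩ := hA
  rw [semimonotone_iff]
  intro x hx hx0
  by_contra! hneg
  refine hρ.not_gt (lt_specRad_of_lt_mulVec hN hx hx0 fun i hi => ?_)
  simpa [Matrix.sub_mulVec, Matrix.smul_mulVec] using hneg i hi

theorem IsM0Matrix.of_semimonotone {A : Matrix (Fin n) (Fin n) ℝ} (hA : Semimonotone A)
    (hZ : ∀ i j, i ≠ j → A i j ≤ 0) : IsM0Matrix A := by
  rcases isEmpty_or_nonempty (Fin n) with hn | hn
  · exact ⟨0, 0, fun i => isEmptyElim i, Subsingleton.elim _ _, by simp [specRad]⟩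
  set s := Finset.univ.sup' Finset.univ_nonempty fun i => A i i
  set N := s • 1 - A
  have hN : ∀ i j, 0 ≤ N i j := by
    intro i j
    rcases eq_or_ne i j with rfl | hij
    · simpa [N] using Finset.le_sup' (fun i => A i i) (Finset.mem_univ i)
    · simpa [N, hij] using hZ i j hij
  refine ⟨s, N, hN, (sub_sub_cancel _ _).symm, ?_⟩
  by_contra! hlt
  obtain ⟨x, hx, hx0, hPx⟩ := exists_nonneg_specRad_smul_le_mulVec hN
  obtain ⟨i, hi, hAi⟩ := semimonotone_iff.1 hA x hx hx0
  have hAx : (A *ᵥ x) i = s * x i - (N *ᵥ x) i := by simp [N, Matrix.sub_mulVec, Matrix.smul_mulVec]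
  have hPx_i : specRad N * x i ≤ (N *ᵥ x) i := hPx i
  nlinarith

end Semimonotone

theorem stmt_5 {n : ℕ} (Al Au : Matrix (Fin n) (Fin n) ℝ)
    (hle : ∀ i j, Al i j ≤ Au i j)
    (Ac : Matrix (Fin n) (Fin n) ℝ) (hAc : Ac = (1/2 : ℝ) • (Al + Au)) (hM : IsM0Matrix Ac) :
    (∀ A : Matrix (Fin n) (Fin n) ℝ, memInterval Al Au A → Semimonotone A) ↔ IsM0Matrix Al := by
  have hZ : ∀ i j, i ≠ j → Al i j ≤ 0 := fun i j hij => by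
    have hAc_ij : Ac i j = (Al i j + Au i j) / 2 := by simp [hAc]; ring
    linarith [hM.apply_nonpos hij, hle i j]
  constructor
  · exact fun h => .of_semimonotone (h Al fun i j => ⟨le_rfl, hle i j⟩) hZ
  · exact fun hAl A hA => hAl.semimonotone.of_le fun i j => (hA i j).1
end

section
/- Let [A] be an interval matrix with midpoint Ac and radius Δ. Then [A] is strongly principally nondegenerate if and only if for all vectors y, z ∈ {0,1,−1}^n with |y| = |z| (entrywise absolute values) one has det(D_{e−|y|} + D_{|y|} Ac D_{|z|}) · det(D_{e−|y|} + D_{|y|} Ac D_{|z|} − D_y Δ D_z) > 0. -/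
open Matrix

lemma myND_detMask {n : ℕ} (I : Finset (Fin n)) (u v : Fin n → ℝ)
    (hu1 : ∀ i, i ∈ I → u i = 1) (hu0 : ∀ i, i ∉ I → u i = 0)
    (hv1 : ∀ i, i ∈ I → v i = 1) (hv0 : ∀ i, i ∉ I → v i = 0)
    (A : Matrix (Fin n) (Fin n) ℝ) :
    (Matrix.diagonal (fun i => 1 - u i) + Matrix.diagonal u * A * Matrix.diagonal v).det
      = (A.submatrix ((↑) : ↥I → Fin n) ((↑) : ↥I → Fin n)).det := by
  classical
  set M := Matrix.diagonal (fun i => 1 - u i) + Matrix.diagonal u * A * Matrix.diagonal v with hM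
  have hMe : ∀ i j, M i j = (if i = j then 1 - u i else 0) + u i * A i j * v j := by
    intro i j
    simp [hM, Matrix.add_apply, Matrix.mul_diagonal, Matrix.diagonal_mul,
      Matrix.diagonal_apply]
  let e : ↥I ⊕ {a : Fin n // a ∉ I} ≃ Fin n := Equiv.sumCompl (· ∈ I)
  have h1 : M.det = (M.submatrix e e).det := (Matrix.det_submatrix_equiv_self e M).symm
  have h2 : M.submatrix e e
      = Matrix.fromBlocks (A.submatrix ((↑) : ↥I → Fin n) ((↑) : ↥I → Fin n)) 0 0 1 := by
    ext i j
    cases i with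
    | inl a =>
      cases j with
      | inl b =>
        show M ↑a ↑b = A ↑a ↑b
        rw [hMe, hu1 _ a.2, hv1 _ b.2]
        split_ifs with h <;> ring
      | inr b =>
        show M ↑a ↑b = 0
        have hne : (↑a : Fin n) ≠ ↑b := fun h => b.2 (h ▸ a.2)
        rw [hMe, if_neg hne, hv0 _ b.2]
        ring
    | inr a =>
      cases j with
      | inl b =>
        show M ↑a ↑b = 0
        have hne : (↑a : Fin n) ≠ ↑b := fun h => a.2 (h ▸ b.2)
        rw [hMe, if_neg hne, hu0 _ a.2]
        ring
      | inr b =>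
        show M ↑a ↑b = (1 : Matrix {a : Fin n // a ∉ I} {a : Fin n // a ∉ I} ℝ) a b
        rw [hMe, hu0 _ a.2, Matrix.one_apply]
        rcases eq_or_ne a b with h | h
        · subst h; simp
        · have hne : (↑a : Fin n) ≠ ↑b := fun hc => h (Subtype.ext hc)
          simp [h, hne]
  rw [h1, h2, Matrix.det_fromBlocks_zero₂₁, Matrix.det_one, mul_one]

lemma myND_maskShift {n : ℕ} (Y Z : Fin n → ℝ)
    (hY : ∀ i, |Y i| * Y i = Y i) (hZ : ∀ i, Z i * |Z i| = Z i)
    (Ac Δ : Matrix (Fin n) (Fin n) ℝ) :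
    Matrix.diagonal (fun i => 1 - |Y i|)
      + Matrix.diagonal (fun i => |Y i|) * Ac * Matrix.diagonal (fun i => |Z i|)
      - Matrix.diagonal Y * Δ * Matrix.diagonal Z
    = Matrix.diagonal (fun i => 1 - |Y i|)
      + Matrix.diagonal (fun i => |Y i|) * (Ac - Matrix.diagonal Y * Δ * Matrix.diagonal Z)
          * Matrix.diagonal (fun i => |Z i|) := by
  ext i j
  simp only [Matrix.sub_apply, Matrix.add_apply, Matrix.mul_diagonal, Matrix.diagonal_mul]
  have h1 := hY i
  have h2 := hZ j
  linear_combination (Δ i j * Z j * |Z j|) * h1 + (Y i * Δ i j) * h2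

lemma myND_det_affine {m : Type*} [Fintype m] [DecidableEq m]
    (B Δ : Matrix m m ℝ) (z : m → ℝ) (y : m → ℝ) (i : m) :
    ∃ α β : ℝ, ∀ t : ℝ,
      (B - Matrix.diagonal (Function.update y i t) * Δ * Matrix.diagonal z).det = α + t * β := by
  classical
  set M := B - Matrix.diagonal y * Δ * Matrix.diagonal z with hM
  have key : ∀ t : ℝ, B - Matrix.diagonal (Function.update y i t) * Δ * Matrix.diagonal z
      = M.updateRow i ((fun j => B i j) + (-t) • (fun j => Δ i j * z j)) := by
    intro t
    ext r j
    by_cases hr : r = i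
    · subst hr
      rw [Matrix.updateRow_self]
      simp only [Matrix.sub_apply, Matrix.mul_diagonal, Matrix.diagonal_mul,
        Function.update_self, Pi.add_apply, Pi.smul_apply, smul_eq_mul]
      ring
    · rw [Matrix.updateRow_ne hr]
      simp only [hM, Matrix.sub_apply, Matrix.mul_diagonal, Matrix.diagonal_mul,
        Function.update_of_ne hr]
  refine ⟨(M.updateRow i (fun j => B i j)).det,
    -((M.updateRow i (fun j => Δ i j * z j)).det), fun t => ?_⟩
  rw [key t, Matrix.det_updateRow_add, Matrix.det_updateRow_smul]
  ring

lemma myND_vertex_le {m : Type*} [Fintype m] [DecidableEq m] (f : (m → ℝ) → ℝ)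
    (haff : ∀ (y : m → ℝ) (i : m), ∃ α β : ℝ, ∀ t, f (Function.update y i t) = α + t * β)
    (y : m → ℝ) (hy : ∀ i, |y i| ≤ 1) :
    ∃ w : m → ℝ, (∀ i, w i = 1 ∨ w i = -1) ∧ f w ≤ f y := by
  classical
  suffices H : ∀ s : Finset m, ∀ y : m → ℝ, (∀ i, |y i| ≤ 1) →
      (∀ i, i ∉ s → y i = 1 ∨ y i = -1) →
      ∃ w : m → ℝ, (∀ i, w i = 1 ∨ w i = -1) ∧ f w ≤ f y from
    H Finset.univ y hy (fun i hi => absurd (Finset.mem_univ i) hi)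
  intro s
  induction s using Finset.induction_on with
  | empty =>
    intro y hy h
    exact ⟨y, fun i => h i (Finset.notMem_empty i), le_refl _⟩
  | @insert a s ha ih =>
    intro y hy h
    obtain ⟨α, β, hf⟩ := haff y a
    have hya := abs_le.mp (hy a)
    have hfy : f y = α + y a * β := by
      conv_lhs => rw [← Function.update_eq_self a y]
      rw [hf]
    have hstep : ∃ c : ℝ, (c = 1 ∨ c = -1) ∧ f (Function.update y a c) ≤ f y := by
      rcases le_total 0 β with hb | hb
      · exact ⟨-1, Or.inr rfl, by rw [hf, hfy]; nlinarith [hya.1]⟩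
      · exact ⟨1, Or.inl rfl, by rw [hf, hfy]; nlinarith [hya.2]⟩
    obtain ⟨c, hc, hcle⟩ := hstep
    have h1 : ∀ i, |Function.update y a c i| ≤ 1 := by
      intro i
      by_cases hi : i = a
      · subst hi; rcases hc with h' | h' <;> simp [h']
      · rw [Function.update_of_ne hi]; exact hy i
    have h2 : ∀ i, i ∉ s → Function.update y a c i = 1 ∨ Function.update y a c i = -1 := by
      intro i hi
      by_cases hia : i = a
      · subst hia; rw [Function.update_self]; exact hc
      · rw [Function.update_of_ne hia]
        refine h i (fun hmem => ?_)
        rcases Finset.mem_insert.mp hmem with h' | h'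
        · exact hia h'
        · exact hi h'
    obtain ⟨w, hw, hfw⟩ := ih (Function.update y a c) h1 h2
    exact ⟨w, hw, hfw.trans hcle⟩

lemma myND_vertex_ge {m : Type*} [Fintype m] [DecidableEq m] (f : (m → ℝ) → ℝ)
    (haff : ∀ (y : m → ℝ) (i : m), ∃ α β : ℝ, ∀ t, f (Function.update y i t) = α + t * β)
    (y : m → ℝ) (hy : ∀ i, |y i| ≤ 1) :
    ∃ w : m → ℝ, (∀ i, w i = 1 ∨ w i = -1) ∧ f y ≤ f w := by
  obtain ⟨w, hw, hfw⟩ := myND_vertex_le (fun v => -(f v))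
    (fun y i => by
      obtain ⟨α, β, hf⟩ := haff y i
      exact ⟨-α, -β, fun t => by show -(f (Function.update y i t)) = _; rw [hf]; ring⟩) y hy
  exact ⟨w, hw, by linarith⟩

theorem myND_main {n : ℕ} (Al Au : Matrix (Fin n) (Fin n) ℝ)
    (hle : ∀ i j, Al i j ≤ Au i j)
    (Ac : Matrix (Fin n) (Fin n) ℝ) (hAc : Ac = (1/2 : ℝ) • (Al + Au)) (Δ : Matrix (Fin n) (Fin n) ℝ) (hΔ : Δ = (1/2 : ℝ) • (Au - Al)) :
    (∀ A : Matrix (Fin n) (Fin n) ℝ, (∀ i j, Al i j ≤ A i j ∧ A i j ≤ Au i j) →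
        ∀ I : Finset (Fin n), I.Nonempty →
          (A.submatrix ((↑) : ↥I → Fin n) ((↑) : ↥I → Fin n)).det ≠ 0) ↔
      (∀ y z : Fin n → ℝ,
        (∀ i, y i = 0 ∨ y i = 1 ∨ y i = -1) →
        (∀ i, z i = 0 ∨ z i = 1 ∨ z i = -1) →
        (∀ i, |y i| = |z i|) →
        0 < (Matrix.diagonal (fun i => 1 - |y i|) +
              Matrix.diagonal (fun i => |y i|) * Ac * Matrix.diagonal (fun i => |z i|)).det *
            (Matrix.diagonal (fun i => 1 - |y i|) +
              Matrix.diagonal (fun i => |y i|) * Ac * Matrix.diagonal (fun i => |z i|) -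
              Matrix.diagonal y * Δ * Matrix.diagonal z).det) := by
  classical
  have hAce : ∀ i j, Ac i j = (Al i j + Au i j) / 2 := by
    intro i j; rw [hAc]; simp [Matrix.smul_apply, Matrix.add_apply]; ring
  have hΔe : ∀ i j, Δ i j = (Au i j - Al i j) / 2 := by
    intro i j; rw [hΔ]; simp [Matrix.smul_apply, Matrix.sub_apply]; ring
  have hΔ0 : ∀ i j, 0 ≤ Δ i j := by
    intro i j; rw [hΔe]; linarith [hle i j]
  constructor
  · intro H y z hy hz hyz
    by_cases hex : ∃ i, y i ≠ 0
    · set I : Finset (Fin n) := Finset.univ.filter (fun i => y i ≠ 0) with hI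
      have hImem : ∀ i, i ∈ I ↔ y i ≠ 0 := fun i => by simp [hI]
      have hIne : I.Nonempty := by
        obtain ⟨i, hi⟩ := hex; exact ⟨i, (hImem i).mpr hi⟩
      have hu1 : ∀ i, i ∈ I → |y i| = 1 := by
        intro i hi
        rcases hy i with h | h | h
        · exact absurd h ((hImem i).mp hi)
        · simp [h]
        · simp [h]
      have hu0 : ∀ i, i ∉ I → |y i| = 0 := by
        intro i hi
        have : y i = 0 := by
          by_contra hne; exact hi ((hImem i).mpr hne)
        simp [this]
      have hv1 : ∀ i, i ∈ I → |z i| = 1 := fun i hi => by rw [← hyz i]; exact hu1 i hi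
      have hv0 : ∀ i, i ∉ I → |z i| = 0 := fun i hi => by rw [← hyz i]; exact hu0 i hi
      have hyabs : ∀ i, |y i| ≤ 1 := by
        intro i; rcases hy i with h | h | h <;> simp [h]
      have hzabs : ∀ i, |z i| ≤ 1 := by
        intro i; rcases hz i with h | h | h <;> simp [h]
      set N := Matrix.diagonal y * Δ * Matrix.diagonal z with hN
      have hNe : ∀ i j, N i j = y i * Δ i j * z j := by
        intro i j; simp [hN, Matrix.mul_diagonal, Matrix.diagonal_mul]
      have hNb : ∀ i j, |N i j| ≤ Δ i j := by
        intro i j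
        rw [hNe, abs_mul, abs_mul, abs_of_nonneg (hΔ0 i j)]
        have h1 := hyabs i; have h2 := hzabs j
        have h3 := abs_nonneg (y i); have h4 := abs_nonneg (z j)
        have s1 : |y i| * Δ i j ≤ Δ i j := by nlinarith [hΔ0 i j]
        have s2 : |y i| * Δ i j * |z j| ≤ |y i| * Δ i j := by
          nlinarith [mul_nonneg h3 (hΔ0 i j)]
        linarith
      have hmem : ∀ t : ℝ, t ∈ Set.Icc (0:ℝ) 1 →
          ∀ i j, Al i j ≤ (Ac - t • N) i j ∧ (Ac - t • N) i j ≤ Au i j := by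
        intro t ht i j
        have h2 : |t * N i j| ≤ Δ i j := by
          rw [abs_mul, abs_of_nonneg ht.1]
          nlinarith [abs_nonneg (N i j), ht.2, hNb i j, hΔ0 i j]
        rw [abs_le] at h2
        have he : (Ac - t • N) i j = Ac i j - t * N i j := by
          simp [Matrix.sub_apply, Matrix.smul_apply, smul_eq_mul]
        rw [he, hAce i j]
        have := hΔe i j
        constructor <;> linarith [h2.1, h2.2]
      set g : ℝ → ℝ :=
        fun t => ((Ac - t • N).submatrix ((↑) : ↥I → Fin n) ((↑) : ↥I → Fin n)).det with hg
      have hgc : Continuous g := by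
        apply Continuous.matrix_det
        apply continuous_matrix
        intro i j
        simp only [Matrix.submatrix_apply, Matrix.sub_apply, Matrix.smul_apply, smul_eq_mul]
        exact continuous_const.sub (continuous_id.mul continuous_const)
      have hnz : ∀ t ∈ Set.Icc (0:ℝ) 1, g t ≠ 0 := fun t ht =>
        H (Ac - t • N) (hmem t ht) I hIne
      have hd1 : (Matrix.diagonal (fun i => 1 - |y i|) +
            Matrix.diagonal (fun i => |y i|) * Ac * Matrix.diagonal (fun i => |z i|)).det
          = g 0 := by
        have h0 : g 0 = (Ac.submatrix ((↑) : ↥I → Fin n) ((↑) : ↥I → Fin n)).det := by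
          show ((Ac - (0:ℝ) • N).submatrix _ _).det = _
          norm_num
        rw [h0]
        exact myND_detMask I _ _ hu1 hu0 hv1 hv0 Ac
      have hYY : ∀ i, |y i| * y i = y i := by
        intro i; rcases hy i with h | h | h <;> simp [h]
      have hZZ : ∀ i, z i * |z i| = z i := by
        intro i; rcases hz i with h | h | h <;> simp [h]
      have hd2 : (Matrix.diagonal (fun i => 1 - |y i|) +
            Matrix.diagonal (fun i => |y i|) * Ac * Matrix.diagonal (fun i => |z i|) -
            Matrix.diagonal y * Δ * Matrix.diagonal z).det = g 1 := by
        have h0 : g 1 = ((Ac - N).submatrix ((↑) : ↥I → Fin n) ((↑) : ↥I → Fin n)).det := by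
          show ((Ac - (1:ℝ) • N).submatrix _ _).det = _
          rw [one_smul]
        rw [h0, myND_maskShift y z hYY hZZ Ac Δ]
        exact myND_detMask I _ _ hu1 hu0 hv1 hv0 (Ac - N)
      rw [hd1, hd2]
      by_contra hcon
      push_neg at hcon
      have h0 : g 0 ≠ 0 := hnz 0 (Set.mem_Icc.mpr ⟨le_refl 0, zero_le_one⟩)
      have h1 : g 1 ≠ 0 := hnz 1 (Set.mem_Icc.mpr ⟨zero_le_one, le_refl 1⟩)
      have hzero : ∃ t ∈ Set.Icc (0:ℝ) 1, g t = 0 := by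
        rcases lt_or_gt_of_ne h0 with hg0 | hg0
        · have hg1 : 0 < g 1 := by
            rcases lt_or_gt_of_ne h1 with h | h
            · nlinarith
            · exact h
          obtain ⟨t, ht, hgt⟩ := intermediate_value_Icc (by norm_num : (0:ℝ) ≤ 1)
            hgc.continuousOn (Set.mem_Icc.mpr ⟨le_of_lt hg0, le_of_lt hg1⟩)
          exact ⟨t, ht, hgt⟩
        · have hg1 : g 1 < 0 := by
            rcases lt_or_gt_of_ne h1 with h | h
            · exact h
            · nlinarith
          obtain ⟨t, ht, hgt⟩ := intermediate_value_Icc' (by norm_num : (0:ℝ) ≤ 1)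
            hgc.continuousOn (Set.mem_Icc.mpr ⟨le_of_lt hg1, le_of_lt hg0⟩)
          exact ⟨t, ht, hgt⟩
      obtain ⟨t, ht, hgt⟩ := hzero
      exact hnz t ht hgt
    · push_neg at hex
      have hz0 : ∀ i, z i = 0 := by
        intro i
        have := hyz i
        rw [hex i] at this
        simpa using this.symm
      have hyf : y = 0 := funext hex
      have hzf : z = 0 := funext hz0
      subst hyf; subst hzf
      have : Matrix.diagonal (0 : Fin n → ℝ) = 0 := Matrix.diagonal_zero
      simp [Matrix.diagonal_one, this]
  · intro H A hA I hIne hdet0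
    obtain ⟨v, hv0, hAv⟩ := Matrix.exists_mulVec_eq_zero_iff.mpr hdet0
    set A' := A.submatrix ((↑) : ↥I → Fin n) ((↑) : ↥I → Fin n) with hA'
    set Ac' := Ac.submatrix ((↑) : ↥I → Fin n) ((↑) : ↥I → Fin n) with hAc'
    set Δ' := Δ.submatrix ((↑) : ↥I → Fin n) ((↑) : ↥I → Fin n) with hΔ'
    set z' : ↥I → ℝ := fun i => if 0 ≤ v i then 1 else -1 with hz'
    set av : ↥I → ℝ := fun i => |v i| with hav
    have hz'v : ∀ i, z' i * v i = |v i| := by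
      intro i
      by_cases h : 0 ≤ v i
      · simp [hz', h, abs_of_nonneg h]
      · push_neg at h
        simp only [hz', if_neg (not_le.mpr h), abs_of_neg h]
        ring
    have hz'1 : ∀ i, z' i = 1 ∨ z' i = -1 := by
      intro i; by_cases h : 0 ≤ v i
      · left; simp [hz', h]
      · right; simp [hz', h]
    have hΔ'0 : ∀ i j, 0 ≤ Δ' i j := fun i j => hΔ0 _ _
    have hdd : ∀ i j, |Ac' i j - A' i j| ≤ Δ' i j := by
      intro i j
      have h1 := (hA (↑i) (↑j)).1
      have h2 := (hA (↑i) (↑j)).2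
      have e1 : Ac' i j = (Al ↑i ↑j + Au ↑i ↑j) / 2 := hAce _ _
      have e2 : Δ' i j = (Au ↑i ↑j - Al ↑i ↑j) / 2 := hΔe _ _
      have e3 : A' i j = A ↑i ↑j := rfl
      rw [abs_le]
      constructor <;> rw [e1, e2, e3] <;> linarith
    have hbound : ∀ i, |Ac'.mulVec v i| ≤ Δ'.mulVec av i := by
      intro i
      have hAvi : ∑ j, A' i j * v j = 0 := by
        have : A'.mulVec v i = 0 := by rw [hAv]; rfl
        exact this
      have he : Ac'.mulVec v i = ∑ j, (Ac' i j - A' i j) * v j := by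
        simp only [Matrix.mulVec, dotProduct, sub_mul, Finset.sum_sub_distrib, hAvi,
          sub_zero]
      rw [he]
      calc |∑ j, (Ac' i j - A' i j) * v j| ≤ ∑ j, |(Ac' i j - A' i j) * v j| :=
            Finset.abs_sum_le_sum_abs _ _
        _ ≤ ∑ j, Δ' i j * av j := by
            apply Finset.sum_le_sum
            intro j _
            rw [abs_mul]
            exact mul_le_mul_of_nonneg_right (hdd i j) (abs_nonneg _)
        _ = Δ'.mulVec av i := rfl
    set dv : ↥I → ℝ := Δ'.mulVec av with hdv
    have hdv0 : ∀ i, 0 ≤ dv i := by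
      intro i
      have : dv i = ∑ j, Δ' i j * av j := rfl
      rw [this]
      exact Finset.sum_nonneg fun j _ => mul_nonneg (hΔ'0 i j) (abs_nonneg _)
    set y0 : ↥I → ℝ := fun i => if dv i = 0 then 0 else Ac'.mulVec v i / dv i with hy0
    have hy0le : ∀ i, |y0 i| ≤ 1 := by
      intro i
      by_cases h : dv i = 0
      · simp [hy0, h]
      · have hpos : 0 < dv i := lt_of_le_of_ne (hdv0 i) (Ne.symm h)
        simp only [hy0, if_neg h]
        rw [abs_div, abs_of_pos hpos, div_le_one hpos]
        exact hbound i
    set f : (↥I → ℝ) → ℝ :=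
      fun w => (Ac' - Matrix.diagonal w * Δ' * Matrix.diagonal z').det with hf
    have hMv : ∀ (w : ↥I → ℝ) (i : ↥I),
        (Ac' - Matrix.diagonal w * Δ' * Matrix.diagonal z').mulVec v i
          = Ac'.mulVec v i - w i * dv i := by
      intro w i
      have hDm : (Matrix.diagonal w * Δ' * Matrix.diagonal z').mulVec v i = w i * dv i := by
        have e : (Matrix.diagonal w * Δ' * Matrix.diagonal z').mulVec v i
            = ∑ j, w i * Δ' i j * z' j * v j := by
          simp [Matrix.mulVec, dotProduct, Matrix.mul_diagonal, Matrix.diagonal_mul,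
            mul_assoc]
        rw [e]
        have e2 : dv i = ∑ j, Δ' i j * av j := rfl
        rw [e2, Finset.mul_sum]
        apply Finset.sum_congr rfl
        intro j _
        have e3 : av j = z' j * v j := (hz'v j).symm
        rw [e3]
        ring
      rw [Matrix.sub_mulVec, Pi.sub_apply, hDm]
    have hsing : f y0 = 0 := by
      show (Ac' - Matrix.diagonal y0 * Δ' * Matrix.diagonal z').det = 0
      refine Matrix.exists_mulVec_eq_zero_iff.mp ⟨v, hv0, ?_⟩
      funext i
      rw [Pi.zero_apply, hMv y0 i]
      by_cases h : dv i = 0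
      · have hb := hbound i
        rw [h] at hb
        have hz0 : Ac'.mulVec v i = 0 := abs_nonpos_iff.mp hb
        rw [hz0]
        simp [hy0, h]
      · simp only [hy0, if_neg h]
        rw [div_mul_cancel₀ _ h, sub_self]
    have haff : ∀ (w : ↥I → ℝ) (i : ↥I), ∃ α β : ℝ, ∀ t,
        f (Function.update w i t) = α + t * β := by
      intro w i
      obtain ⟨α, β, hab⟩ := myND_det_affine Ac' Δ' z' w i
      exact ⟨α, β, fun t => hab t⟩
    obtain ⟨wm, hwm, hwmle⟩ := myND_vertex_le f haff y0 hy0le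
    obtain ⟨wp, hwp, hwpge⟩ := myND_vertex_ge f haff y0 hy0le
    rw [hsing] at hwmle hwpge
    have key : ∀ w : ↥I → ℝ, (∀ i, w i = 1 ∨ w i = -1) → 0 < Ac'.det * f w := by
      intro w hw
      set Y : Fin n → ℝ := fun i => if h : i ∈ I then w ⟨i, h⟩ else 0 with hY
      set Z : Fin n → ℝ := fun i => if h : i ∈ I then z' ⟨i, h⟩ else 0 with hZ
      have hYmem : ∀ (i : Fin n) (h : i ∈ I), Y i = w ⟨i, h⟩ := by
        intro i h; simp only [hY]; exact dif_pos h
      have hZmem : ∀ (i : Fin n) (h : i ∈ I), Z i = z' ⟨i, h⟩ := by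
        intro i h; simp only [hZ]; exact dif_pos h
      have hYout : ∀ i, i ∉ I → Y i = 0 := by
        intro i h; simp only [hY]; exact dif_neg h
      have hZout : ∀ i, i ∉ I → Z i = 0 := by
        intro i h; simp only [hZ]; exact dif_neg h
      have hY3 : ∀ i, Y i = 0 ∨ Y i = 1 ∨ Y i = -1 := by
        intro i
        by_cases h : i ∈ I
        · rw [hYmem i h]; right; exact hw ⟨i, h⟩
        · left; exact hYout i h
      have hZ3 : ∀ i, Z i = 0 ∨ Z i = 1 ∨ Z i = -1 := by
        intro i
        by_cases h : i ∈ I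
        · rw [hZmem i h]; right; exact hz'1 ⟨i, h⟩
        · left; exact hZout i h
      have hu1 : ∀ i, i ∈ I → |Y i| = 1 := by
        intro i h
        rw [hYmem i h]
        rcases hw ⟨i, h⟩ with h' | h' <;> simp [h']
      have hu0 : ∀ i, i ∉ I → |Y i| = 0 := by
        intro i h; rw [hYout i h]; simp
      have hv1 : ∀ i, i ∈ I → |Z i| = 1 := by
        intro i h
        rw [hZmem i h]
        rcases hz'1 ⟨i, h⟩ with h' | h' <;> simp [h']
      have hv0 : ∀ i, i ∉ I → |Z i| = 0 := by
        intro i h; rw [hZout i h]; simp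
      have hYZ : ∀ i, |Y i| = |Z i| := by
        intro i
        by_cases h : i ∈ I
        · rw [hu1 i h, hv1 i h]
        · rw [hu0 i h, hv0 i h]
      have hYY : ∀ i, |Y i| * Y i = Y i := by
        intro i; rcases hY3 i with h | h | h <;> simp [h]
      have hZZ : ∀ i, Z i * |Z i| = Z i := by
        intro i; rcases hZ3 i with h | h | h <;> simp [h]
      have hpos := H Y Z hY3 hZ3 hYZ
      rw [myND_maskShift Y Z hYY hZZ Ac Δ,
        myND_detMask I _ _ hu1 hu0 hv1 hv0 Ac,
        myND_detMask I _ _ hu1 hu0 hv1 hv0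
          (Ac - Matrix.diagonal Y * Δ * Matrix.diagonal Z)] at hpos
      have esub : (Ac - Matrix.diagonal Y * Δ * Matrix.diagonal Z).submatrix
            ((↑) : ↥I → Fin n) ((↑) : ↥I → Fin n)
          = Ac' - Matrix.diagonal w * Δ' * Matrix.diagonal z' := by
        ext i j
        have hYi : Y ↑i = w i := by rw [hYmem ↑i i.2]
        have hZj : Z ↑j = z' j := by rw [hZmem ↑j j.2]
        simp [Matrix.sub_apply, Matrix.submatrix_apply, Matrix.mul_diagonal,
          Matrix.diagonal_mul, hYi, hZj, hAc', hΔ']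
      rw [esub] at hpos
      exact hpos
    have h1 := key wm hwm
    have h2 := key wp hwp
    rcases lt_trichotomy Ac'.det 0 with hd | hd | hd
    · nlinarith [h2, hwpge, hd]
    · rw [hd] at h1; simp at h1
    · nlinarith [h1, hwmle, hd]

theorem stmt_7 {n : ℕ} (Al Au : Matrix (Fin n) (Fin n) ℝ)
    (hle : ∀ i j, Al i j ≤ Au i j)
    (Ac : Matrix (Fin n) (Fin n) ℝ) (hAc : Ac = (1/2 : ℝ) • (Al + Au)) (Δ : Matrix (Fin n) (Fin n) ℝ) (hΔ : Δ = (1/2 : ℝ) • (Au - Al)) :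
    (∀ A : Matrix (Fin n) (Fin n) ℝ, memInterval Al Au A → PrincipallyNondegenerate A) ↔
      (∀ y z : Fin n → ℝ,
        (∀ i, y i = 0 ∨ y i = 1 ∨ y i = -1) →
        (∀ i, z i = 0 ∨ z i = 1 ∨ z i = -1) →
        (∀ i, |y i| = |z i|) →
        0 < (Matrix.diagonal (fun i => 1 - |y i|) +
              Matrix.diagonal (fun i => |y i|) * Ac * Matrix.diagonal (fun i => |z i|)).det *
            (Matrix.diagonal (fun i => 1 - |y i|) +
              Matrix.diagonal (fun i => |y i|) * Ac * Matrix.diagonal (fun i => |z i|) -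
              Matrix.diagonal y * Δ * Matrix.diagonal z).det) :=
  myND_main Al Au hle Ac hAc Δ hΔ
end

section
/- Let [A] be an interval matrix with midpoint Ac = (1/2)(A̲+Ā), and suppose Ac is an M-matrix. Then [A] is strongly principally nondegenerate if and only if every A ∈ [A] is an H-matrix. -/
open Matrix

/-! Call a real square matrix a Z-matrix if its off-diagonal entries are nonpositive, and
semipositive if `C u > 0` for some `u > 0`. A Z-matrix is an M-matrix iff it is semipositive: one
direction bounds the spectrum by a weighted Gershgorin argument, the other builds `u` from a
truncated Neumann series once Gelfand's formula gives `‖N ^ k‖ < s ^ k`.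

Both `Ac` and the lower bound `A̲` are Z-matrices (off the diagonal `A̲ ≤ -A̅`), hence so is every
matrix of the segment between them, which lies in `[A]`. On a connected set of principally
nonsingular Z-matrices semipositivity is open and closed. Closedness goes by induction on the size:
a limit `C` of semipositive Z-matrices has some `v ≥ 0`, `v ≠ 0` with `C v ≥ 0`, which makes `C`
block triangular along the support of `v`; the diagonal block on the support is fixed up by
perturbing `v` with a solution of a nonsingular principal subsystem, the other one is handled by
induction. So `A̲` is semipositive, and for `A ∈ [A]` the comparison matrix `⟨A⟩` dominates `A̲`
entrywise, hence is an M-matrix. Conversely, if `⟨A⟩ u > 0` with `u > 0`, every principal submatrix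
of `A` becomes strictly diagonally dominant after scaling its columns by `u`, hence is nonsingular.
-/

open Filter Topology

theorem eventually_forall_pos_add_mul {ι : Type*} [Finite ι] {a b : ι → ℝ}
    (h : ∀ i, 0 < a i ∨ (a i = 0 ∧ 0 < b i)) :
    ∀ᶠ ε in 𝓝[>] (0 : ℝ), ∀ i, 0 < a i + ε * b i := by
  refine eventually_all.2 fun i => (h i).elim (fun ha => ?_) fun ⟨ha, hb⟩ => ?_
  · have hlim : Tendsto (fun ε : ℝ => a i + ε * b i) (𝓝 0) (𝓝 (a i)) :=
      (continuous_const.add (continuous_id.mul continuous_const)).tendsto' _ _ (by simp)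
    exact nhdsWithin_le_nhds (hlim.eventually_const_lt ha)
  · filter_upwards [self_mem_nhdsWithin] with ε hε
    simpa [ha] using mul_pos hε hb

theorem exists_nnnorm_pow_lt_of_spectralRadius_lt {A : Type*} [NormedRing A] [NormedAlgebra ℂ A]
    [CompleteSpace A] (a : A) {r : NNReal} (h : spectralRadius ℂ a < r) :
    ∃ k, 0 < k ∧ ‖a ^ k‖₊ < r ^ k := by
  have hgelfand := spectrum.pow_nnnorm_pow_one_div_tendsto_nhds_spectralRadius a
  obtain ⟨k, hk, hk0⟩ := ((hgelfand.eventually (gt_mem_nhds h)).and (eventually_gt_atTop 0)).exists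
  refine ⟨k, hk0, ?_⟩
  rw [one_div, ENNReal.rpow_inv_lt_iff (by positivity), ENNReal.rpow_natCast] at hk
  exact_mod_cast hk

namespace Matrix

variable {ι κ : Type*}

-- `IsSemipositive`, `PrincipallyNonsingular` and `comparison` are `IsSMatrix`,
-- `PrincipallyNondegenerate` and `compMatrix` over an arbitrary index type, as the induction
-- below passes to principal submatrices indexed by subtypes; `PrincipallyNonsingular` also
-- admits the empty index set, whose minor is `1`.
def IsZMatrix (C : Matrix ι ι ℝ) : Prop :=
  ∀ i j, i ≠ j → C i j ≤ 0

def IsSemipositive [Fintype ι] (C : Matrix ι ι ℝ) : Prop :=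
  ∃ u : ι → ℝ, (∀ i, 0 < u i) ∧ ∀ i, 0 < (C *ᵥ u) i

def PrincipallyNonsingular [DecidableEq ι] (C : Matrix ι ι ℝ) : Prop :=
  ∀ J : Finset ι, (C.submatrix ((↑) : J → ι) (↑)).det ≠ 0

def comparison [DecidableEq ι] (A : Matrix ι ι ℝ) : Matrix ι ι ℝ :=
  fun i j => if i = j then |A i i| else -|A i j|

theorem isZMatrix_comparison [DecidableEq ι] (A : Matrix ι ι ℝ) : A.comparison.IsZMatrix :=
  fun i j hij => by simp [comparison, hij]

theorem comparison_submatrix [DecidableEq ι] [DecidableEq κ] (A : Matrix ι ι ℝ) {f : κ → ι}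
    (hf : Function.Injective f) : (A.submatrix f f).comparison = A.comparison.submatrix f f := by
  ext i j
  simp [comparison, hf.eq_iff]

theorem IsZMatrix.submatrix {C : Matrix ι ι ℝ} (hC : C.IsZMatrix) {f : κ → ι}
    (hf : Function.Injective f) : (C.submatrix f f).IsZMatrix :=
  fun _ _ hij => hC _ _ (hf.ne hij)

theorem convex_setOf_isZMatrix : Convex ℝ {C : Matrix ι ι ℝ | C.IsZMatrix} :=
  fun x hx y hy a b ha hb _ i j hij => by
    simpa using add_nonpos (mul_nonpos_of_nonneg_of_nonpos ha (hx i j hij))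
      (mul_nonpos_of_nonneg_of_nonpos hb (hy i j hij))

theorem PrincipallyNonsingular.submatrix [DecidableEq ι] [DecidableEq κ] {C : Matrix ι ι ℝ}
    (hC : C.PrincipallyNonsingular) (f : κ ↪ ι) : (C.submatrix f f).PrincipallyNonsingular := by
  intro K
  have : (C.submatrix f f).submatrix ((↑) : K → κ) (↑) =
      (C.submatrix ((↑) : K.map f → ι) (↑)).submatrix (K.equivMap f) (K.equivMap f) := rfl
  rw [this, det_submatrix_equiv_self]
  exact hC _

section Fintype

variable [Fintype ι]

theorem IsSemipositive.of_le {A B : Matrix ι ι ℝ} (hA : A.IsSemipositive)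
    (h : ∀ i j, A i j ≤ B i j) : B.IsSemipositive := by
  obtain ⟨u, hu, hAu⟩ := hA
  exact ⟨u, hu, fun i => (hAu i).trans_le <|
    Finset.sum_le_sum fun j _ => mul_le_mul_of_nonneg_right (h i j) (hu j).le⟩

theorem isOpen_setOf_isSemipositive : IsOpen {C : Matrix ι ι ℝ | C.IsSemipositive} := by
  have : {C : Matrix ι ι ℝ | C.IsSemipositive} =
      ⋃ u ∈ {u : ι → ℝ | ∀ i, 0 < u i}, ⋂ i, {C | 0 < (C *ᵥ u) i} := by
    ext
    simp [IsSemipositive]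
  rw [this]
  refine isOpen_biUnion fun u _ => isOpen_iInter_of_finite fun i => isOpen_lt continuous_const ?_
  exact (continuous_apply i).comp (continuous_id.matrix_mulVec continuous_const)

theorem isSemipositive_of_lex_pos {C : Matrix ι ι ℝ} {a b : ι → ℝ}
    (ha : ∀ i, 0 < a i ∨ (a i = 0 ∧ 0 < b i))
    (hCa : ∀ i, 0 < (C *ᵥ a) i ∨ ((C *ᵥ a) i = 0 ∧ 0 < (C *ᵥ b) i)) : C.IsSemipositive := by
  obtain ⟨ε, hpos, hCpos⟩ :=
    ((eventually_forall_pos_add_mul ha).and (eventually_forall_pos_add_mul hCa)).exists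
  refine ⟨a + ε • b, fun i => hpos i, fun i => ?_⟩
  simpa [mulVec_add, mulVec_smul] using hCpos i

theorem mulVec_dite_zero_apply (C : Matrix ι ι ℝ) (p : ι → Prop) [DecidablePred p]
    (x : {j // p j} → ℝ) (i : ι) :
    (C *ᵥ fun j => if h : p j then x ⟨j, h⟩ else 0) i = ∑ j : {j // p j}, C i j * x j := by
  rw [mulVec, dotProduct, ← Fintype.sum_subtype_add_sum_subtype p]
  have hin (j : {j // p j}) : C i j * (if h : p j then x ⟨j, h⟩ else 0) = C i j * x j := by
    rw [dif_pos j.2]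
  have hout (j : {j // ¬ p j}) : C i j * (if h : p j then x ⟨j, h⟩ else 0) = 0 := by
    rw [dif_neg j.2, mul_zero]
  simp only [hin, hout, Finset.sum_const_zero, add_zero]

theorem isSemipositive_of_blockTriangular {C : Matrix ι ι ℝ} (p : ι → Prop) [DecidablePred p]
    (hzero : ∀ i j, ¬ p i → p j → C i j = 0)
    (h₁ : (C.submatrix ((↑) : {i // p i} → ι) (↑)).IsSemipositive)
    (h₂ : (C.submatrix ((↑) : {i // ¬ p i} → ι) (↑)).IsSemipositive) : C.IsSemipositive := by
  obtain ⟨x, hx, hCx⟩ := h₁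
  obtain ⟨y, hy, hCy⟩ := h₂
  refine isSemipositive_of_lex_pos (a := fun j => if h : p j then x ⟨j, h⟩ else 0)
    (b := fun j => if h : ¬ p j then y ⟨j, h⟩ else 0) (fun i => ?_) fun i => ?_
  · by_cases hi : p i
    · simpa [hi] using hx ⟨i, hi⟩
    · simpa [hi] using hy ⟨i, hi⟩
  · rw [mulVec_dite_zero_apply, mulVec_dite_zero_apply]
    by_cases hi : p i
    · exact Or.inl (hCx ⟨i, hi⟩)
    · exact Or.inr ⟨Finset.sum_eq_zero fun j _ => by rw [hzero i j hi j.2, zero_mul],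
        hCy ⟨i, hi⟩⟩

theorem IsSemipositive.exists_mem_stdSimplex [Nonempty ι] {C : Matrix ι ι ℝ}
    (hC : C.IsSemipositive) : ∃ v ∈ stdSimplex ℝ ι, ∀ i, 0 < (C *ᵥ v) i := by
  obtain ⟨u, hu, hCu⟩ := hC
  have hsum : 0 < ∑ i, u i := Finset.sum_pos (fun i _ => hu i) Finset.univ_nonempty
  refine ⟨(∑ i, u i)⁻¹ • u, ⟨fun i => ?_, ?_⟩, fun i => ?_⟩
  · simpa using (mul_pos (inv_pos.2 hsum) (hu i)).le
  · simp [← Finset.mul_sum, hsum.ne']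
  · simpa [mulVec_smul] using mul_pos (inv_pos.2 hsum) (hCu i)

theorem exists_mem_stdSimplex_mulVec_nonneg [Nonempty ι] {C : Matrix ι ι ℝ}
    (hC : C ∈ closure {M : Matrix ι ι ℝ | M.IsSemipositive}) :
    ∃ v ∈ stdSimplex ℝ ι, ∀ i, 0 ≤ (C *ᵥ v) i := by
  have : FrechetUrysohnSpace (Matrix ι ι ℝ) := inferInstanceAs (FrechetUrysohnSpace (ι → ι → ℝ))
  obtain ⟨Ms, hMs, hlim⟩ := mem_closure_iff_seq_limit.1 hC
  choose vs hvs hMv using fun k => (hMs k).exists_mem_stdSimplex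
  obtain ⟨v, hv, φ, hφ, hvlim⟩ := (isCompact_stdSimplex ℝ ι).tendsto_subseq hvs
  have hprod := (hlim.comp hφ.tendsto_atTop).prodMk_nhds hvlim
  have hcont : Continuous fun Mv : Matrix ι ι ℝ × (ι → ℝ) => Mv.1 *ᵥ Mv.2 :=
    continuous_fst.matrix_mulVec continuous_snd
  refine ⟨v, hv, fun i => ?_⟩
  have hlimi : Tendsto (fun k => (Ms (φ k) *ᵥ vs (φ k)) i) atTop (𝓝 ((C *ᵥ v) i)) :=
    ((continuous_apply i).tendsto _).comp ((hcont.tendsto (C, v)).comp hprod)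
  exact ge_of_tendsto' hlimi fun k => (hMv (φ k) i).le

theorem IsZMatrix.apply_eq_zero_of_mulVec_nonneg {C : Matrix ι ι ℝ} (hZ : C.IsZMatrix)
    {v : ι → ℝ} (hv : ∀ j, 0 ≤ v j) {i j : ι} (hCv : 0 ≤ (C *ᵥ v) i) (hvi : v i = 0)
    (hvj : 0 < v j) : C i j = 0 := by
  have hterm : ∀ k ∈ Finset.univ, C i k * v k ≤ 0 := fun k _ => by
    rcases eq_or_ne i k with rfl | hik
    · rw [hvi, mul_zero]
    · exact mul_nonpos_of_nonpos_of_nonneg (hZ i k hik) (hv k)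
  have hzero := (Finset.sum_eq_zero_iff_of_nonpos hterm).1 (le_antisymm
    (Finset.sum_nonpos hterm) hCv) j (Finset.mem_univ j)
  exact (mul_eq_zero.1 hzero).resolve_right hvj.ne'

variable [DecidableEq ι]

theorem mulVec_pow_nonneg {N : Matrix ι ι ℝ}
    (hN : ∀ i j, 0 ≤ N i j) {x : ι → ℝ} (hx : ∀ i, 0 ≤ x i) (m : ℕ) (i : ι) :
    0 ≤ (N ^ m *ᵥ x) i := by
  induction m generalizing i with
  | zero => simpa using hx i
  | succ m ih =>
    rw [pow_succ', ← mulVec_mulVec]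
    exact Finset.sum_nonneg fun j _ => mul_nonneg (hN i j) (ih j)

theorem algebraMap_mulVec (s : ℝ) (v : ι → ℝ) :
    algebraMap ℝ (Matrix ι ι ℝ) s *ᵥ v = s • v := by
  rw [Algebra.algebraMap_eq_smul_one, smul_mulVec, one_mulVec]

theorem IsSemipositive.submatrix [Fintype κ] {C : Matrix ι ι ℝ}
    (hC : C.IsSemipositive) (hZ : C.IsZMatrix) {f : κ → ι} (hf : Function.Injective f) :
    (C.submatrix f f).IsSemipositive := by
  obtain ⟨u, hu, hCu⟩ := hC
  refine ⟨u ∘ f, fun k => hu _, fun k => ?_⟩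
  let F : Finset ι := Finset.univ.map ⟨f, hf⟩
  have hout : ∑ j ∈ Fᶜ, C (f k) j * u j ≤ 0 := Finset.sum_nonpos fun j hj =>
    mul_nonpos_of_nonpos_of_nonneg (hZ _ _ fun h => Finset.mem_compl.1 hj (by simp [F, ← h]))
      (hu j).le
  have hk := hCu (f k)
  rw [mulVec, dotProduct, ← Finset.sum_add_sum_compl F, Finset.sum_map] at hk
  simp only [Function.Embedding.coeFn_mk] at hk
  change 0 < ∑ k', C (f k) (f k') * u (f k')
  linarith

theorem det_ne_zero_of_sum_row_mul_lt_diag {K : Type*} [RCLike K] {A : Matrix ι ι K}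
    {u : ι → ℝ} (hu : ∀ i, 0 < u i)
    (h : ∀ k, ∑ j ∈ Finset.univ.erase k, ‖A k j‖ * u j < ‖A k k‖ * u k) : A.det ≠ 0 := by
  have hscaled : (A * diagonal fun i => (u i : K)).det ≠ 0 := by
    refine det_ne_zero_of_sum_row_lt_diag fun k => ?_
    simpa only [mul_diagonal, norm_mul, RCLike.norm_ofReal, abs_of_pos (hu _)] using h k
  rw [det_mul, det_diagonal] at hscaled
  exact left_ne_zero_of_mul hscaled

theorem comparison_mulVec (A : Matrix ι ι ℝ) (u : ι → ℝ) (i : ι) :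
    (A.comparison *ᵥ u) i = |A i i| * u i - ∑ j ∈ Finset.univ.erase i, |A i j| * u j := by
  rw [mulVec, dotProduct, ← Finset.add_sum_erase _ _ (Finset.mem_univ i), sub_eq_add_neg,
    ← Finset.sum_neg_distrib]
  refine congrArg₂ (· + ·) (by simp [comparison]) (Finset.sum_congr rfl fun j hj => ?_)
  simp [comparison, (Finset.ne_of_mem_erase hj).symm]

theorem det_ne_zero_of_isSemipositive_comparison {A : Matrix ι ι ℝ}
    (h : A.comparison.IsSemipositive) : A.det ≠ 0 := by
  obtain ⟨u, hu, hAu⟩ := h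
  refine det_ne_zero_of_sum_row_mul_lt_diag hu fun k => ?_
  simpa only [Real.norm_eq_abs, comparison_mulVec, sub_pos] using hAu k

theorem PrincipallyNonsingular.isSemipositive_of_mulVec_nonneg {C : Matrix ι ι ℝ}
    (hC : C.PrincipallyNonsingular) {v : ι → ℝ} (hv : ∀ i, 0 < v i)
    (hCv : ∀ i, 0 ≤ (C *ᵥ v) i) : C.IsSemipositive := by
  classical
  set J := Finset.univ.filter fun i => (C *ᵥ v) i = 0
  obtain ⟨z, hz⟩ : ∃ z, C.submatrix ((↑) : J → ι) ((↑) : J → ι) *ᵥ z = 1 :=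
    ⟨(C.submatrix ((↑) : J → ι) ((↑) : J → ι))⁻¹ *ᵥ 1, by
      rw [mulVec_mulVec, mul_nonsing_inv _ (isUnit_iff_ne_zero.2 (hC J)), one_mulVec]⟩
  refine isSemipositive_of_lex_pos (a := v) (b := fun j => if h : j ∈ J then z ⟨j, h⟩ else 0)
    (fun i => Or.inl (hv i)) fun i => ?_
  rcases (hCv i).lt_or_eq with h | h
  · exact Or.inl h
  · have hiJ : i ∈ J := Finset.mem_filter.2 ⟨Finset.mem_univ i, h.symm⟩
    have hzi := congrFun hz ⟨i, hiJ⟩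
    simp only [mulVec, dotProduct, submatrix_apply, Pi.one_apply] at hzi
    refine Or.inr ⟨h.symm, ?_⟩
    rw [mulVec_dite_zero_apply]
    refine one_pos.trans_eq ?_
    rw [← hzi]
    congr!

theorem IsZMatrix.isSemipositive_of_mem_closure {C : Matrix ι ι ℝ} (hZ : C.IsZMatrix)
    (hC : C.PrincipallyNonsingular)
    (hcl : C ∈ closure {M : Matrix ι ι ℝ | M.IsZMatrix ∧ M.IsSemipositive}) :
    C.IsSemipositive := by
  induction hn : Fintype.card ι using Nat.strong_induction_on generalizing ι with
  | _ n ih =>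
  rcases isEmpty_or_nonempty ι with hι | hι
  · exact ⟨0, isEmptyElim, isEmptyElim⟩
  obtain ⟨v, ⟨hv0, hv1⟩, hCv⟩ :=
    exists_mem_stdSimplex_mulVec_nonneg (closure_mono (fun M hM => hM.2) hcl)
  obtain ⟨i₀, hi₀⟩ : ∃ i, 0 < v i := by
    by_contra! h
    have : ∑ i, v i = 0 := Finset.sum_eq_zero fun i _ => le_antisymm (h i) (hv0 i)
    linarith
  refine isSemipositive_of_blockTriangular (fun i => 0 < v i)
    (fun i j hi hj => hZ.apply_eq_zero_of_mulVec_nonneg hv0 (hCv i) (le_antisymm (not_lt.1 hi)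
      (hv0 i)) hj) ?_ ?_
  · refine (hC.submatrix (Function.Embedding.subtype _)).isSemipositive_of_mulVec_nonneg
      (v := fun i => v i) (fun i => i.2) fun i => ?_
    have hout : ∑ j : {j // ¬ 0 < v j}, C i j * v j = 0 := Finset.sum_eq_zero fun j _ => by
      rw [le_antisymm (not_lt.1 j.2) (hv0 j), mul_zero]
    have hi := hCv i
    rw [mulVec, dotProduct, ← Fintype.sum_subtype_add_sum_subtype (fun j => 0 < v j), hout,
      add_zero] at hi
    exact hi
  · refine ih _ (hn ▸ Fintype.card_subtype_lt (not_not.2 hi₀))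
      (hZ.submatrix Subtype.val_injective) (hC.submatrix (Function.Embedding.subtype _)) ?_ rfl
    exact map_mem_closure (f := fun M : Matrix ι ι ℝ => M.submatrix Subtype.val Subtype.val)
      (continuous_id.matrix_submatrix _ _) hcl fun M hM =>
      ⟨hM.1.submatrix Subtype.val_injective, hM.2.submatrix hM.1 Subtype.val_injective⟩

end Fintype

end Matrix

open Matrix

theorem IsPreconnected.isSemipositive {ι : Type*} [Fintype ι] [DecidableEq ι]
    {S : Set (Matrix ι ι ℝ)} (hS : IsPreconnected S)
    (hSZ : ∀ M ∈ S, M.IsZMatrix ∧ M.PrincipallyNonsingular) {A B : Matrix ι ι ℝ} (hA : A ∈ S)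
    (hAs : A.IsSemipositive) (hB : B ∈ S) : B.IsSemipositive := by
  have := isPreconnected_iff_preconnectedSpace.1 hS
  have hU : IsClopen {M : S | (M : Matrix ι ι ℝ).IsSemipositive} := by
    refine ⟨closure_subset_iff_isClosed.1 fun M hM => ?_,
      isOpen_setOf_isSemipositive.preimage continuous_subtype_val⟩
    exact (hSZ M M.2).1.isSemipositive_of_mem_closure (hSZ M M.2).2 <|
      map_mem_closure continuous_subtype_val hM fun N hN => ⟨(hSZ N N.2).1, hN⟩
  exact Set.eq_univ_iff_forall.1 (hU.eq_univ ⟨⟨A, hA⟩, hAs⟩) ⟨B, hB⟩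

section SpectralRadius

open scoped Matrix.Norms.Operator

variable {n : ℕ} {N : Matrix (Fin n) (Fin n) ℝ}

theorem specRad_lt_of_mulVec_lt (hN : ∀ i j, 0 ≤ N i j) {s : ℝ} (hs : 0 < s) {u : Fin n → ℝ}
    (hu : ∀ i, 0 < u i) (hNu : ∀ i, (N *ᵥ u) i < s * u i) : specRad N < s := by
  rcases isEmpty_or_nonempty (Fin n) with hn | hn
  · simp [specRad, spectralRadius, spectrum.of_subsingleton, hs]
  refine ENNReal.toReal_lt_of_lt_ofReal (spectrum.spectralRadius_lt_of_forall_lt _ fun z hz => ?_)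
  by_contra! hsz
  have hsz : s ≤ ‖z‖ := Real.toNNReal_le_iff_le_coe.1 hsz
  refine hz ((isUnit_iff_isUnit_det _).2 (isUnit_iff_ne_zero.2
    (det_ne_zero_of_sum_row_mul_lt_diag hu fun k => ?_)))
  have hdiag : s - N k k ≤ ‖(algebraMap ℂ _ z - N.map (algebraMap ℝ ℂ)) k k‖ := by
    simpa [algebraMap_matrix_apply, abs_of_nonneg (hN k k)] using
      (sub_le_sub_right hsz _).trans (norm_sub_norm_le z (N k k : ℂ))
  have hoff : ∀ j ∈ Finset.univ.erase k,
      ‖(algebraMap ℂ _ z - N.map (algebraMap ℝ ℂ)) k j‖ * u j = N k j * u j := fun j hj => by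
    simp [algebraMap_matrix_apply, (Finset.ne_of_mem_erase hj).symm, abs_of_nonneg (hN k j)]
  calc ∑ j ∈ Finset.univ.erase k, ‖(algebraMap ℂ _ z - N.map (algebraMap ℝ ℂ)) k j‖ * u j
      = (N *ᵥ u) k - N k k * u k := by
        rw [Finset.sum_congr rfl hoff, Finset.sum_erase_eq_sub (Finset.mem_univ k)]
        rfl
    _ < (s - N k k) * u k := by linarith [hNu k]
    _ ≤ _ := mul_le_mul_of_nonneg_right hdiag (hu k).le

theorem exists_pos_mulVec_lt_of_specRad_lt (hN : ∀ i j, 0 ≤ N i j) {s : ℝ} (h : specRad N < s) :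
    ∃ u : Fin n → ℝ, (∀ i, 0 < u i) ∧ ∀ i, (N *ᵥ u) i < s * u i := by
  have hs : 0 < s := ENNReal.toReal_nonneg.trans_lt h
  rcases isEmpty_or_nonempty (Fin n) with hn | hn
  · exact ⟨0, isEmptyElim, isEmptyElim⟩
  set M := N.map (algebraMap ℝ ℂ)
  have hρ : spectralRadius ℂ M < s.toNNReal := by
    have hfin : spectralRadius ℂ M ≠ ⊤ :=
      ne_top_of_le_ne_top ENNReal.coe_ne_top (spectrum.spectralRadius_le_nnnorm M)
    rw [← ENNReal.ofReal_toReal hfin]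
    exact (ENNReal.ofReal_lt_ofReal_iff hs).2 h
  obtain ⟨k, hk0, hk⟩ := exists_nnnorm_pow_lt_of_spectralRadius_lt M hρ
  have hrow : ∀ i, (N ^ k *ᵥ 1) i < s ^ k := fun i => by
    have hMk : ‖M ^ k‖ < s ^ k := by
      simpa [hs.le] using NNReal.coe_lt_coe.2 hk
    have hMk1 : (M ^ k *ᵥ 1) i = ((N ^ k *ᵥ 1) i : ℂ) := by
      rw [← Matrix.map_pow]
      simpa using (RingHom.map_mulVec (algebraMap ℝ ℂ) (N ^ k) 1 i).symm
    calc (N ^ k *ᵥ 1) i ≤ ‖(M ^ k *ᵥ 1) i‖ := by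
          rw [hMk1, Complex.norm_real]
          exact le_abs_self _
      _ ≤ ‖M ^ k *ᵥ 1‖ := norm_le_pi_norm _ i
      _ ≤ ‖M ^ k‖ * ‖(1 : Fin n → ℂ)‖ := linfty_opNorm_mulVec _ _
      _ < s ^ k := by rwa [norm_one, mul_one]
  set x := algebraMap ℝ (Matrix (Fin n) (Fin n) ℝ) s
  -- `G *ᵥ 1` is a truncated Neumann series for `(s - N)⁻¹ *ᵥ 1`.
  set G := ∑ j ∈ Finset.range k, x ^ j * N ^ (k - 1 - j)
  have hG : (x - N) * G = x ^ k - N ^ k := (Algebra.commute_algebraMap_left s N).mul_geom_sum₂ k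
  have hx (j : ℕ) (v : Fin n → ℝ) : x ^ j *ᵥ v = s ^ j • v := by
    rw [← map_pow, algebraMap_mulVec]
  refine ⟨G *ᵥ 1, fun i => ?_, fun i => ?_⟩
  · have hterm (j : ℕ) :
        ((x ^ j * N ^ (k - 1 - j)) *ᵥ 1) i = s ^ j * (N ^ (k - 1 - j) *ᵥ 1) i := by
      rw [← mulVec_mulVec, hx, Pi.smul_apply, smul_eq_mul]
    simp only [G, sum_mulVec, Finset.sum_apply, hterm]
    refine Finset.sum_pos' (fun j _ => mul_nonneg (pow_nonneg hs.le _)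
      (mulVec_pow_nonneg hN (fun _ => zero_le_one) _ _)) ⟨k - 1, by simp [hk0], ?_⟩
    simpa using pow_pos hs _
  · have hGi := congrFun (congrArg (· *ᵥ (1 : Fin n → ℝ)) hG) i
    rw [← mulVec_mulVec, sub_mulVec, sub_mulVec, algebraMap_mulVec, hx] at hGi
    simp only [Pi.sub_apply, Pi.smul_apply, smul_eq_mul, Pi.one_apply, mul_one] at hGi
    linarith [hrow i]

end SpectralRadius

theorem isMMatrix_iff {n : ℕ} (C : Matrix (Fin n) (Fin n) ℝ) :
    IsMMatrix C ↔ C.IsZMatrix ∧ C.IsSemipositive := by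
  constructor
  · rintro ⟨s, N, hN, rfl, hρ⟩
    obtain ⟨u, hu, hNu⟩ := exists_pos_mulVec_lt_of_specRad_lt hN hρ
    refine ⟨fun i j hij => by simp [hij, hN i j], u, hu, fun i => ?_⟩
    simpa [sub_mulVec, smul_mulVec, sub_pos] using hNu i
  · rintro ⟨hZ, u, hu, hCu⟩
    set s := 1 + ∑ i, |C i i|
    have hs : 0 < s := by positivity
    have hN : ∀ i j, 0 ≤ (s • (1 : Matrix (Fin n) (Fin n) ℝ) - C) i j := fun i j => by
      rcases eq_or_ne i j with rfl | hij
      · have : |C i i| ≤ ∑ k, |C k k| :=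
          Finset.single_le_sum (f := fun k => |C k k|) (fun k _ => abs_nonneg _) (Finset.mem_univ i)
        simp only [Matrix.sub_apply, Matrix.smul_apply, one_apply_eq, smul_eq_mul, mul_one,
          sub_nonneg]
        linarith [le_abs_self (C i i)]
      · simpa [hij] using hZ i j hij
    refine ⟨s, _, hN, (sub_sub_cancel _ _).symm, specRad_lt_of_mulVec_lt hN hs hu fun i => ?_⟩
    simpa [sub_mulVec, smul_mulVec] using hCu i

theorem PrincipallyNondegenerate.principallyNonsingular {n : ℕ} {A : Matrix (Fin n) (Fin n) ℝ}
    (h : PrincipallyNondegenerate A) : A.PrincipallyNonsingular := fun J =>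
  J.eq_empty_or_nonempty.elim (fun hJ => by subst hJ; simp) (h J)

theorem IsHMatrix.principallyNondegenerate {n : ℕ} {A : Matrix (Fin n) (Fin n) ℝ}
    (h : IsHMatrix A) : PrincipallyNondegenerate A := by
  have hA : A.comparison.IsSemipositive := ((isMMatrix_iff _).1 h).2
  intro J _
  refine det_ne_zero_of_isSemipositive_comparison ?_
  rw [comparison_submatrix A Subtype.val_injective]
  exact hA.submatrix (isZMatrix_comparison A) Subtype.val_injective

theorem convex_setOf_memInterval {n : ℕ} (Al Au : Matrix (Fin n) (Fin n) ℝ) :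
    Convex ℝ {A | memInterval Al Au A} := fun x hx y hy a b ha hb hab i j => by
  have hconv (c : ℝ) : c = a * c + b * c := by rw [← add_mul, hab, one_mul]
  simp only [Matrix.add_apply, Matrix.smul_apply, smul_eq_mul]
  constructor
  · linarith [hconv (Al i j), mul_le_mul_of_nonneg_left (hx i j).1 ha,
      mul_le_mul_of_nonneg_left (hy i j).1 hb]
  · linarith [hconv (Au i j), mul_le_mul_of_nonneg_left (hx i j).2 ha,
      mul_le_mul_of_nonneg_left (hy i j).2 hb]

theorem le_comparison_of_memInterval {n : ℕ} {Al Au A : Matrix (Fin n) (Fin n) ℝ}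
    (hA : memInterval Al Au A) (hsum : ∀ i j, i ≠ j → Al i j + Au i j ≤ 0) (i j : Fin n) :
    Al i j ≤ A.comparison i j := by
  rcases eq_or_ne i j with rfl | hij
  · simpa [comparison] using (hA i i).1.trans (le_abs_self _)
  · have := hsum i j hij
    simp only [comparison, hij, if_false, le_neg, abs_le]
    constructor <;> linarith [hA i j]

theorem stmt_8 {n : ℕ} (Al Au : Matrix (Fin n) (Fin n) ℝ)
    (hle : ∀ i j, Al i j ≤ Au i j)
    (Ac : Matrix (Fin n) (Fin n) ℝ) (hAc : Ac = (1/2 : ℝ) • (Al + Au)) (hM : IsMMatrix Ac) :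
    (∀ A : Matrix (Fin n) (Fin n) ℝ, memInterval Al Au A → PrincipallyNondegenerate A) ↔ (∀ A : Matrix (Fin n) (Fin n) ℝ, memInterval Al Au A → IsHMatrix A) := by
  obtain ⟨hAcZ, hAcS⟩ := (isMMatrix_iff Ac).1 hM
  have hsum : ∀ i j, i ≠ j → Al i j + Au i j ≤ 0 := fun i j hij => by
    have := hAcZ i j hij
    simp only [hAc, Matrix.smul_apply, Matrix.add_apply, smul_eq_mul] at this
    linarith
  have hAlZ : Al.IsZMatrix := fun i j hij => by linarith [hsum i j hij, hle i j]
  have hAcmem : memInterval Al Au Ac := fun i j => by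
    simp only [hAc, Matrix.smul_apply, Matrix.add_apply, smul_eq_mul]
    constructor <;> linarith [hle i j]
  have hAlmem : memInterval Al Au Al := fun i j => ⟨le_rfl, hle i j⟩
  refine ⟨fun hPN A hA => ?_, fun hH A hA => (hH A hA).principallyNondegenerate⟩
  have hseg (M) (hM : M ∈ segment ℝ Ac Al) : M.IsZMatrix ∧ M.PrincipallyNonsingular :=
    ⟨convex_setOf_isZMatrix.segment_subset hAcZ hAlZ hM, (hPN M <|
      (convex_setOf_memInterval Al Au).segment_subset hAcmem hAlmem hM).principallyNonsingular⟩
  have hAlS : Al.IsSemipositive := (convex_segment Ac Al).isPreconnected.isSemipositive hseg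
    (left_mem_segment ℝ Ac Al) hAcS (right_mem_segment ℝ Ac Al)
  exact (isMMatrix_iff _).2
    ⟨isZMatrix_comparison A, hAlS.of_le (le_comparison_of_memInterval hA hsum)⟩
end

section
/- Let [A] be an interval matrix determined by A̲ ≤ Ā. Then [A] is strongly column sufficient if and only if for every pair of disjoint index sets I, J ⊆ {1,…,n} with I ∪ J ≠ ∅, the system [[A̲_{I,I}, −Ā_{I,J}],[−Ā_{J,I}, A̲_{J,J}]] x ≨ 0 (i.e. ≤ 0 entrywise and not all zero), x > 0, is infeasible. -/
open Matrix

/-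
Lowering the diagonal blocks to `Al` and raising the off-diagonal blocks to `Au` can only decrease
`csBlock A I J *ᵥ x` for `x > 0`, so the mixed block system is the hardest one among all `A ∈ [A]`.
It is moreover attained: the matrix taking `Au` on `I × J ∪ J × I` and `Al` elsewhere lies in `[A]`
and has `csMixedBlock Al Au I J` as its block matrix.
-/

theorem Matrix.mulVec_le_mulVec_of_le {m n R : Type*} [Fintype n] [Semiring R] [PartialOrder R]
    [IsOrderedRing R] {M N : Matrix m n R} (hMN : ∀ i j, M i j ≤ N i j) {x : n → R}
    (hx : 0 ≤ x) : M *ᵥ x ≤ N *ᵥ x :=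
  fun i => dotProduct_le_dotProduct_of_nonneg_right (hMN i) hx

lemma csMixedBlock_le_csBlock {n : ℕ} {Al Au A : Matrix (Fin n) (Fin n) ℝ}
    (hA : memInterval Al Au A) (I J : Finset (Fin n)) :
    ∀ k l, csMixedBlock Al Au I J k l ≤ csBlock A I J k l := by
  rintro (i | i) (j | j) <;> simp [csMixedBlock, csBlock, (hA _ _).1, (hA _ _).2]

def csVertex {n : ℕ} (Al Au : Matrix (Fin n) (Fin n) ℝ) (I J : Finset (Fin n)) :
    Matrix (Fin n) (Fin n) ℝ :=
  Matrix.of fun i j => if (i ∈ I ∧ j ∈ J) ∨ (i ∈ J ∧ j ∈ I) then Au i j else Al i j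

lemma memInterval_csVertex {n : ℕ} {Al Au : Matrix (Fin n) (Fin n) ℝ}
    (hle : ∀ i j, Al i j ≤ Au i j) (I J : Finset (Fin n)) :
    memInterval Al Au (csVertex Al Au I J) := by
  intro i j
  rw [csVertex, Matrix.of_apply]
  split_ifs <;> simp [hle i j]

lemma csBlock_csVertex {n : ℕ} (Al Au : Matrix (Fin n) (Fin n) ℝ) {I J : Finset (Fin n)}
    (hIJ : Disjoint I J) : csBlock (csVertex Al Au I J) I J = csMixedBlock Al Au I J := by
  ext (i | i) (j | j) <;>
    simp [csBlock, csMixedBlock, csVertex, Finset.disjoint_left.mp hIJ,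
      Finset.disjoint_right.mp hIJ]

theorem stmt_11 {n : ℕ} (Al Au : Matrix (Fin n) (Fin n) ℝ)
    (hle : ∀ i j, Al i j ≤ Au i j) :
    (∀ A : Matrix (Fin n) (Fin n) ℝ, memInterval Al Au A → ColumnSufficient A) ↔
      (∀ I J : Finset (Fin n), Disjoint I J → (I ∪ J).Nonempty →
        ¬ ∃ x : (↥I ⊕ ↥J) → ℝ,
          (∀ k, (csMixedBlock Al Au I J).mulVec x k ≤ 0) ∧
          (csMixedBlock Al Au I J).mulVec x ≠ 0 ∧
          (∀ k, 0 < x k)) := by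
  constructor
  · rintro hstrong I J hIJ hne ⟨x, hxle, hxne, hxpos⟩
    rw [← csBlock_csVertex Al Au hIJ] at hxle hxne
    exact hstrong _ (memInterval_csVertex hle I J) I J hIJ hne ⟨x, hxle, hxne, hxpos⟩
  · rintro hmixed A hA I J hIJ hne ⟨x, hxle, hxne, hxpos⟩
    have hlow : csMixedBlock Al Au I J *ᵥ x ≤ csBlock A I J *ᵥ x :=
      Matrix.mulVec_le_mulVec_of_le (csMixedBlock_le_csBlock hA I J) fun k => (hxpos k).le
    refine hmixed I J hIJ hne ⟨x, fun k => (hlow k).trans (hxle k), fun h0 => hxne ?_, hxpos⟩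
    exact le_antisymm hxle (h0 ▸ hlow)
end

section
/- Let [A] be an interval matrix with midpoint Ac and radius Δ. Then [A] is strongly column sufficient if and only if for every sign vector s ∈ {±1}^n the matrix A_ss = Ac − D_s Δ D_s is column sufficient. -/
open Matrix

theorem stmt_12 {n : ℕ} (Al Au : Matrix (Fin n) (Fin n) ℝ)
    (hle : ∀ i j, Al i j ≤ Au i j)
    (Ac : Matrix (Fin n) (Fin n) ℝ) (hAc : Ac = (1/2 : ℝ) • (Al + Au)) (Δ : Matrix (Fin n) (Fin n) ℝ) (hΔ : Δ = (1/2 : ℝ) • (Au - Al)) :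
    (∀ A : Matrix (Fin n) (Fin n) ℝ, memInterval Al Au A → ColumnSufficient A) ↔
      (∀ s : Fin n → ℝ, (∀ i, s i = 1 ∨ s i = -1) →
        ColumnSufficient (Ac - Matrix.diagonal s * Δ * Matrix.diagonal s)) := by

  have hDelta : ∀ i j, 0 ≤ Δ i j := by
    intro i j
    rw [hΔ]
    simp only [Matrix.smul_apply, Matrix.sub_apply, smul_eq_mul]
    linarith [hle i j]
  have hentry : ∀ (s : Fin n → ℝ) i j,
      (Ac - Matrix.diagonal s * Δ * Matrix.diagonal s) i j = Ac i j - s i * Δ i j * s j := by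
    intro s i j
    simp [Matrix.sub_apply, Matrix.mul_diagonal, Matrix.diagonal_mul]
  have hAcl : ∀ i j, Ac i j - Δ i j = Al i j := by
    intro i j
    rw [hAc, hΔ]
    simp only [Matrix.smul_apply, Matrix.add_apply, Matrix.sub_apply, smul_eq_mul]
    ring
  have hAcu : ∀ i j, Ac i j + Δ i j = Au i j := by
    intro i j
    rw [hAc, hΔ]
    simp only [Matrix.smul_apply, Matrix.add_apply, Matrix.sub_apply, smul_eq_mul]
    ring
  constructor
  · intro h s hs
    apply h
    intro i j
    rw [hentry]
    rcases hs i with hi | hi <;> rcases hs j with hj | hj <;>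
      rw [hi, hj] <;>
      constructor <;>
      [skip; skip; skip; skip; skip; skip; skip; skip] <;>
      nlinarith [hAcl i j, hAcu i j, hDelta i j, hle i j]
  · intro h A hA I J hIJ hne
    rintro ⟨x, hx1, hx2, hx3⟩
    set s : Fin n → ℝ := fun i => if i ∈ J then -1 else 1 with hs_def
    have hs : ∀ i, s i = 1 ∨ s i = -1 := by
      intro i; by_cases hi : i ∈ J <;> simp [hs_def, hi]
    have hsI : ∀ i : Fin n, i ∈ I → s i = 1 := by
      intro i hi
      have : i ∉ J := Finset.disjoint_left.mp hIJ hi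
      simp [hs_def, this]
    have hsJ : ∀ i : Fin n, i ∈ J → s i = -1 := by
      intro i hi; simp [hs_def, hi]
    set As := Ac - Matrix.diagonal s * Δ * Matrix.diagonal s with hAs_def
    have hble : ∀ k l, csBlock As I J k l ≤ csBlock A I J k l := by
      intro k l
      rcases k with i | i <;> rcases l with j | j <;>
        simp only [csBlock, Matrix.fromBlocks_apply₁₁, Matrix.fromBlocks_apply₁₂,
          Matrix.fromBlocks_apply₂₁, Matrix.fromBlocks_apply₂₂, Matrix.neg_apply,
          Matrix.submatrix_apply, hAs_def, hentry]
      · rw [hsI _ i.2, hsI _ j.2]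
        have := (hA i j).1
        nlinarith [hAcl (i : Fin n) (j : Fin n)]
      · rw [hsI _ i.2, hsJ _ j.2]
        have := (hA i j).2
        nlinarith [hAcu (i : Fin n) (j : Fin n)]
      · rw [hsJ _ i.2, hsI _ j.2]
        have := (hA i j).2
        nlinarith [hAcu (i : Fin n) (j : Fin n)]
      · rw [hsJ _ i.2, hsJ _ j.2]
        have := (hA i j).1
        nlinarith [hAcl (i : Fin n) (j : Fin n)]
    have hmv : ∀ k, (csBlock As I J).mulVec x k ≤ (csBlock A I J).mulVec x k := by
      intro k
      simp only [Matrix.mulVec, dotProduct]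
      apply Finset.sum_le_sum
      intro l _
      exact mul_le_mul_of_nonneg_right (hble k l) (le_of_lt (hx3 l))
    obtain ⟨k, hk⟩ : ∃ k, (csBlock A I J).mulVec x k ≠ 0 := by
      by_contra hc
      push_neg at hc
      exact hx2 (funext hc)
    have hklt : (csBlock A I J).mulVec x k < 0 := lt_of_le_of_ne (hx1 k) hk
    exact h s hs I J hIJ hne ⟨x,
      fun l => le_trans (hmv l) (hx1 l),
      fun h0 => absurd (le_trans (hmv k) (hx1 k)) (by
        have := congrFun h0 k
        simp only [Pi.zero_apply] at this
        intro _
        exact absurd (lt_of_le_of_lt (hmv k) hklt) (by rw [this]; exact lt_irrefl 0)),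
      hx3⟩
end
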